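/- Let T be a triangulated category with coproducts, and let T be a pure-projective silting object of T (meaning the natural map Hom_T(T, Y) → Hom(yT, yY) is bijective for every Y, where y is restricted Yoneda into Mod-T^c over the compact objects). Then the silting t-structure (T^{⊥>0}, T^{⊥≤0}) is smashing: the coaisle T^{⊥≤0} is closed under coproducts taken in T. -/

import Mathlib

open CategoryTheory Limits Pretriangulated

universe v u

variable {C : Type u} [Category.{v} C] [Preadditive C] [HasZeroObject C] [HasShift C ℤ]
  [∀ n : ℤ, (shiftFunctor C n).Additive] [Pretriangulated C]


/-- `X` is a direct summand (retract) of `Y`. -/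
def IsSummand {C : Type u} [Category.{v} C] (X Y : C) : Prop :=
  ∃ (i : X ⟶ Y) (r : Y ⟶ X), i ≫ r = 𝟙 X

/-- An object `K` is compact if `Hom(K, -)` preserves all set-indexed coproducts. -/
def IsCompactObj (K : C) : Prop :=
  ∀ I : Type v, Nonempty (PreservesColimitsOfShape (Discrete I)
    (preadditiveCoyoneda.obj (Opposite.op K)))

/-- The restricted Yoneda functor `y : T ⥤ Mod-T^c`, sending `X` to the restriction of
`Hom_T(-, X)` to the subcategory `Tc` of compact objects. -/
def restrictedYoneda (Tc : Set C) :
    C ⥤ ((ObjectProperty.FullSubcategory fun X : C => X ∈ Tc)ᵒᵖ ⥤ AddCommGrpCat.{v}) :=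
  preadditiveYoneda ⋙ (Functor.whiskeringLeft _ _ _).obj (ObjectProperty.ι fun X : C => X ∈ Tc).op
/-- A torsion pair `(𝒰, 𝒱)` in a triangulated category: both classes are closed under
direct summands, all morphisms from `𝒰` to `𝒱` vanish, and every object fits
in a triangle `U ⟶ X ⟶ V ⟶ U⟦1⟧` with `U ∈ 𝒰` and `V ∈ 𝒱`. -/
structure TorsionPair (𝒰 𝒱 : Set C) : Prop where
  summand_left : ∀ ⦃X Y : C⦄, IsSummand X Y → Y ∈ 𝒰 → X ∈ 𝒰
  summand_right : ∀ ⦃X Y : C⦄, IsSummand X Y → Y ∈ 𝒱 → X ∈ 𝒱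
  hom_zero : ∀ ⦃X Y : C⦄, X ∈ 𝒰 → Y ∈ 𝒱 → ∀ f : X ⟶ Y, f = 0
  exists_triangle : ∀ X : C, ∃ (U V : C) (_ : U ∈ 𝒰) (_ : V ∈ 𝒱)
    (f : U ⟶ X) (g : X ⟶ V) (h : V ⟶ U⟦(1 : ℤ)⟧), Triangle.mk f g h ∈ distTriang C


/-- `M^{⊥>0}`: objects `Y` with `Hom(M, Y[i]) = 0` for all `i > 0`. -/
def rightPerpGT (M : C) : Set C := {Y : C | ∀ i : ℤ, 0 < i → ∀ f : M ⟶ Y⟦i⟧, f = 0}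

/-- `M^{⊥≤0}`: objects `Y` with `Hom(M, Y[i]) = 0` for all `i ≤ 0`. -/
def rightPerpLE (M : C) : Set C := {Y : C | ∀ i : ℤ, i ≤ 0 → ∀ f : M ⟶ Y⟦i⟧, f = 0}

/-- `M` is silting if `(M^{⊥>0}, M^{⊥≤0})` is a t-structure and `M ∈ M^{⊥>0}`. -/
def IsSilting (M : C) : Prop :=
  TorsionPair (rightPerpGT M) (rightPerpLE M) ∧
    (∀ X ∈ rightPerpGT M, X⟦(1 : ℤ)⟧ ∈ rightPerpGT M) ∧ M ∈ rightPerpGT M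

/-!
A morphism `f : M ⟶ (∐ X)⟦n⟧ ≅ ∐ (X i)⟦n⟧` with `n ≤ 0` has every component `f ≫ π i` zero,
since `X i ∈ M^{⊥≤0}`. For compact `K`, `Hom(K, ∐ Z)` is the direct sum of the `Hom(K, Z i)`,
on which the projections are jointly injective; so `g ≫ f = 0` for all `g : K ⟶ M` with `K`
compact, i.e. `y f = 0`, and `f = 0` because `y` is faithful on morphisms out of the
pure-projective object `M`.
-/

open Opposite

theorem AddCommGrpCat.sumAddHom_surjective_of_isColimit {I : Type*} [DecidableEq I]
    {F : Discrete I ⥤ AddCommGrpCat.{v}} {c : Cocone F} (hc : IsColimit c) :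
    Function.Surjective
      (DFinsupp.sumAddHom (β := fun j => F.obj ⟨j⟩) (γ := c.pt) fun j => (c.ι.app ⟨j⟩).hom) := by
  set σ := DFinsupp.sumAddHom (β := fun j => F.obj ⟨j⟩) (γ := c.pt) fun j => (c.ι.app ⟨j⟩).hom
  -- every coprojection vanishes in `c.pt ⧸ σ.range`, hence so does the identity of `c.pt`
  have hq : ofHom (QuotientAddGroup.mk' σ.range) = 0 := by
    refine hc.hom_ext fun ⟨j⟩ => ?_
    ext a
    simpa [QuotientAddGroup.eq_zero_iff, σ] using ⟨DFinsupp.single j a, by simp⟩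
  intro x
  simpa [QuotientAddGroup.eq_zero_iff] using congrArg (fun φ => φ.hom x) hq

theorem Sigma.eq_zero_of_forall_comp_π_eq_zero {A : Type*} [Category.{v} A] [Preadditive A]
    {I : Type*} [DecidableEq I] {Z : I → A} [HasCoproduct Z] {K : A}
    [PreservesColimit (Discrete.functor Z) (preadditiveCoyoneda.obj (op K))]
    (h : K ⟶ ∐ Z) (hh : ∀ j, h ≫ Sigma.π Z j = 0) : h = 0 := by
  let σ := DFinsupp.sumAddHom fun j => Preadditive.rightComp K (Sigma.ι Z j)
  obtain ⟨g, rfl⟩ : ∃ g, σ g = h := AddCommGrpCat.sumAddHom_surjective_of_isColimit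
    (isColimitOfPreserves (preadditiveCoyoneda.obj (op K)) (colimit.isColimit _)) h
  have hπ (k : I) : (Preadditive.rightComp K (Sigma.π Z k)).comp σ =
      DFinsupp.evalAddMonoidHom k := by
    refine DFinsupp.addHom_ext fun j (a : K ⟶ Z j) => ?_
    by_cases hjk : j = k
    · subst hjk
      simp [σ, Preadditive.rightComp, DFinsupp.evalAddMonoidHom]
    · simp [σ, Preadditive.rightComp, DFinsupp.evalAddMonoidHom, Sigma.ι_π_of_ne _ hjk, hjk]
  have hg : g = 0 := DFinsupp.ext fun k => (DFunLike.congr_fun (hπ k) g).symm.trans (hh k)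
  rw [hg, map_zero]

theorem Sigma.eq_zero_of_forall_comp_π_eq_zero_of_restrictedYoneda_injective {A : Type*}
    [Category.{v} A] [Preadditive A] {Tc : Set A} (hcompact : ∀ K ∈ Tc, IsCompactObj K) {M : A}
    {I : Type v} [DecidableEq I] {Z : I → A} [HasCoproduct Z]
    (hM : Function.Injective fun φ : M ⟶ ∐ Z => (restrictedYoneda Tc).map φ)
    (f : M ⟶ ∐ Z) (hf : ∀ j, f ≫ Sigma.π Z j = 0) : f = 0 := by
  refine hM (NatTrans.ext (funext fun K => AddCommGrpCat.ext fun (g : K.unop.obj ⟶ M) => ?_))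
  change g ≫ f = g ≫ 0
  have := (hcompact K.unop.obj K.unop.property I).some
  rw [comp_zero]
  exact Sigma.eq_zero_of_forall_comp_π_eq_zero _ fun j => by rw [Category.assoc, hf, comp_zero]

theorem stmt17_general [HasCoproducts.{v} C]
    (Tc : Set C)
    (hcompact : ∀ K ∈ Tc, IsCompactObj K)
    (M : C)
    (hpp : ∀ Y : C, Function.Bijective fun φ : M ⟶ Y => (restrictedYoneda Tc).map φ)
    {I : Type v} (X : I → C) (hX : ∀ i, X i ∈ rightPerpLE M) :
    (∐ X) ∈ rightPerpLE M := by
  classical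
  intro i hi f
  have hf : f ≫ inv (sigmaComparison (shiftFunctor C i) X) = 0 :=
    Sigma.eq_zero_of_forall_comp_π_eq_zero_of_restrictedYoneda_injective hcompact (hpp _).1 _
      fun j => hX j i hi _
  rw [← Category.comp_id f, ← IsIso.inv_hom_id (sigmaComparison (shiftFunctor C i) X),
    ← Category.assoc, hf, zero_comp]

/-- If `M` is a pure-projective silting object of a compactly generated triangulated
category, then the silting t-structure is smashing: the coaisle `M^{⊥≤0}` is closed under
coproducts taken in `T`. -/
theorem stmt17 [HasCoproducts.{v} C]
    (Tc : Set C) (hsmall : EssentiallySmall.{v} (ObjectProperty.FullSubcategory fun X : C => X ∈ Tc))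
    (hcompact : ∀ K ∈ Tc, IsCompactObj K)
    (hgen : ∀ Y : C, (∀ K ∈ Tc, ∀ f : K ⟶ Y, f = 0) → IsZero Y)
    (M : C) (hM : IsSilting M)
    (hpp : ∀ Y : C, Function.Bijective fun φ : M ⟶ Y => (restrictedYoneda Tc).map φ)
    {I : Type v} (X : I → C) (hX : ∀ i, X i ∈ rightPerpLE M) :
    (∐ X) ∈ rightPerpLE M :=
  stmt17_general Tc hcompact M hpp X hX
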